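/- Let G be a finite group and P a p-subgroup of G. Then C_G(P) has characteristic p if and only if N_G(P) has characteristic p. -/

import Mathlib

open Subgroup

noncomputable section

/-- The `p`-core `O_p(G)`: the largest normal `p`-subgroup of `G`
(defined as the join of all normal `p`-subgroups). -/
def pCore (p : ℕ) (G : Type*) [Group G] : Subgroup G :=
  ⨆ P ∈ {P : Subgroup G | P.Normal ∧ IsPGroup p ↥P}, P

/-- A group has characteristic `p` if `C_G(O_p(G)) ≤ O_p(G)`. -/
def CharacteristicP (p : ℕ) (G : Type*) [Group G] : Prop :=
  Subgroup.centralizer ((pCore p G : Subgroup G) : Set G) ≤ pCore p G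

/-- `G` has local characteristic `p` if the normalizer of every nontrivial
`p`-subgroup has characteristic `p`. -/
def LocalCharacteristicP (p : ℕ) (G : Type*) [Group G] : Prop :=
  ∀ Q : Subgroup G, Q ≠ ⊥ → IsPGroup p ↥Q → CharacteristicP p ↥(Subgroup.normalizer (Q : Set G))

/-- `G` has parabolic characteristic `p` if every `p`-local subgroup containing
a Sylow `p`-subgroup has characteristic `p`. -/
def ParabolicCharacteristicP (p : ℕ) (G : Type*) [Group G] : Prop :=
  ∀ Q : Subgroup G, Q ≠ ⊥ → IsPGroup p ↥Q →
    (∃ S : Sylow p G, (S : Subgroup G) ≤ Subgroup.normalizer (Q : Set G)) → CharacteristicP p ↥(Subgroup.normalizer (Q : Set G))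

/-- A `p`-subgroup `R` is `p`-radical if `R = O_p(N_G(R))`. -/
def IsRadicalPSubgroup (p : ℕ) {G : Type*} [Group G] (R : Subgroup G) : Prop :=
  IsPGroup p ↥R ∧ (pCore p ↥(Subgroup.normalizer (R : Set G))).map (Subgroup.normalizer (R : Set G)).subtype = R

/-- A `p`-subgroup `R` is `p`-centric if `Z(R) = R ⊓ C_G(R)` is a Sylow `p`-subgroup
of `C_G(R)` (equivalently, in a finite group, a maximal `p`-subgroup of `C_G(R)`). -/
def IsPCentric (p : ℕ) {G : Type*} [Group G] (R : Subgroup G) : Prop :=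
  IsPGroup p ↥R ∧
    IsPGroup p ↥(R ⊓ Subgroup.centralizer (R : Set G)) ∧
    ∀ Q : Subgroup G, Q ≤ Subgroup.centralizer (R : Set G) → IsPGroup p ↥Q →
      R ⊓ Subgroup.centralizer (R : Set G) ≤ Q → Q = R ⊓ Subgroup.centralizer (R : Set G)

/-- An element of order `p` is `p`-central if it lies in the center of some
Sylow `p`-subgroup of `G`. -/
def IsPCentralElement (p : ℕ) {G : Type*} [Group G] (x : G) : Prop :=
  orderOf x = p ∧ ∃ S : Sylow p G, x ∈ (S : Subgroup G) ∧ ∀ y ∈ (S : Subgroup G), x * y = y * x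

/-- A `p`-subgroup is purely noncentral if it contains no `p`-central element of `G`. -/
def PurelyNoncentral (p : ℕ) {G : Type*} [Group G] (P : Subgroup G) : Prop :=
  ∀ x ∈ P, ¬ IsPCentralElement p x

/-- Conjugation action of `g` on the group algebra. -/
def conjA {k : Type*} [Semiring k] {G : Type*} [Group G] (g : G) (x : MonoidAlgebra k G) :
    MonoidAlgebra k G :=
  MonoidAlgebra.single g 1 * x * MonoidAlgebra.single g⁻¹ 1

/-- The relative trace map `Tr_H^G` on the group algebra (summing conjugates over
a set of coset representatives of `H`). -/
def relTr {k : Type*} [Semiring k] {G : Type*} [Group G] (H : Subgroup G)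
    (x : MonoidAlgebra k G) : MonoidAlgebra k G :=
  ∑ᶠ q : G ⧸ H, conjA (Quotient.out q) x

/-- A block (idempotent) of `kG`: a primitive central idempotent. -/
def IsBlockOf (k : Type*) [Semiring k] (G : Type*) [Group G] (e : MonoidAlgebra k G) : Prop :=
  e ≠ 0 ∧ e * e = e ∧ (∀ x, e * x = x * e) ∧
    ∀ f g : MonoidAlgebra k G, (∀ x, f * x = x * f) → (∀ x, g * x = x * g) →
      f * f = f → g * g = g → f * g = 0 → f + g = e → f = 0 ∨ g = 0

/-- `D` is a defect group of the block `e`: `D` is a `p`-subgroup, minimal with the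
property that `e` lies in the image of the relative trace map `Tr_D^G` on `D`-fixed points. -/
def IsDefectGroupOf (p : ℕ) (k : Type*) [Semiring k] (G : Type*) [Group G]
    (D : Subgroup G) (e : MonoidAlgebra k G) : Prop :=
  IsPGroup p ↥D ∧
    (∃ x, (∀ h ∈ D, conjA h x = x) ∧ relTr D x = e) ∧
    ∀ Q : Subgroup G, Q ≤ D → (∃ x, (∀ h ∈ Q, conjA h x = x) ∧ relTr Q x = e) → Q = D

/-- The augmentation map on the group algebra; a block is principal iff its
augmentation is nonzero. -/
def augm {k : Type*} [Semiring k] {G : Type*} [Group G] (x : MonoidAlgebra k G) : k :=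
  Finsupp.sum x.coeff fun _ a => a

/-- `E` is subnormal in `G`. -/
def SubnormalIn {G : Type*} [Group G] (E : Subgroup G) : Prop :=
  ∃ (n : ℕ) (f : ℕ → Subgroup G), f 0 = E ∧ f n = ⊤ ∧
    ∀ i < n, f i ≤ f (i + 1) ∧ ((f i).subgroupOf (f (i + 1))).Normal

/-- A quasisimple group: perfect with simple central quotient. -/
def IsQuasisimpleGroup (H : Type*) [Group H] : Prop :=
  commutator H = ⊤ ∧ IsSimpleGroup (H ⧸ Subgroup.center H)

/-- A component of `G`: a subnormal quasisimple subgroup. -/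
def IsComponentOf {G : Type*} [Group G] (E : Subgroup G) : Prop :=
  SubnormalIn E ∧ IsQuasisimpleGroup ↥E

/-- The Fitting subgroup: the join of all nilpotent normal subgroups. -/
def fittingSubgroup (G : Type*) [Group G] : Subgroup G :=
  ⨆ P ∈ {P : Subgroup G | P.Normal ∧ Group.IsNilpotent ↥P}, P

/-- The generalized Fitting subgroup `F*(G) = F(G)E(G)`. -/
def generalizedFitting (G : Type*) [Group G] : Subgroup G :=
  fittingSubgroup G ⊔ ⨆ E ∈ {E : Subgroup G | IsComponentOf E}, E

/-!
`C_G(P)` is normal in `N_G(P)`, and for `H ⊴ K` one has `O_p(H) = O_p(K) ∩ H`.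
If `C_G(P)` has characteristic `p`: an element of `N_G(P)` centralizing `O_p(N_G(P)) ≥ P` lies in
`C_G(P)` and centralizes `O_p(C_G(P)) ≤ O_p(N_G(P))`, so it lies in `O_p(C_G(P))`.
Conversely, a normal subgroup `H` of a group `K` of characteristic `p` has characteristic `p`:
for a `p'`-element `y ∈ C_H(O_p(H))` and `x ∈ O_p(K)`, the commutator `c = [y, x]` lies in
`O_p(K) ∩ H = O_p(H)` and commutes with `y`, so `y^k x y^{-k} = c^k x`; taking `k = |y|` gives
`c^|y| = 1`, whence `c = 1` by coprimality. Thus `y ∈ C_K(O_p(K)) ≤ O_p(K)`, so `y = 1`, and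
`C_H(O_p(H))` is a normal `p`-subgroup of `H`.
-/

open scoped commutatorElement

section pCore

variable {p : ℕ} {G : Type*} [Group G]

theorem le_pCore {N : Subgroup G} (hN : N.Normal) (hNp : IsPGroup p N) : N ≤ pCore p G :=
  le_biSup id ⟨hN, hNp⟩

theorem pCore_normal : (pCore p G).Normal :=
  biSup_normal _ id fun _ hN => hN.1

theorem isPGroup_pCore [Finite G] [Fact p.Prime] : IsPGroup p (pCore p G) := by
  obtain ⟨S⟩ := (inferInstance : Nonempty (Sylow p G))
  refine S.isPGroup'.to_le (iSup₂_le fun N hN => ?_)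
  have := hN.1
  exact hN.2.le_sylow_of_normal S

end pCore

theorem isPGroup_of_forall_orderOf_prime {p : ℕ} [Fact p.Prime] {G : Type*} [Group G] [Finite G]
    (h : ∀ g : G, (orderOf g).Prime → orderOf g = p) : IsPGroup p G := by
  have hp : p.Prime := Fact.out
  rw [isPGroup_iff_primeFactors_card_subset hp.ne_zero, hp.primeFactors]
  intro q hq
  obtain ⟨hq, hqG, -⟩ := Nat.mem_primeFactors.mp hq
  have := Fact.mk hq
  obtain ⟨g, rfl⟩ := exists_prime_orderOf_dvd_card' q hqG
  simpa using h g hq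

theorem commute_of_commute_commutatorElement {G : Type*} [Group G] {x y : G}
    (h : Commute y ⁅y, x⁆) (hcop : (orderOf ⁅y, x⁆).Coprime (orderOf y)) : Commute y x := by
  set c := ⁅y, x⁆ with hc
  have hconj : ∀ k : ℕ, y ^ k * x * (y ^ k)⁻¹ = c ^ k * x := by
    intro k
    induction k with
    | zero => simp
    | succ k ih =>
      calc y ^ (k + 1) * x * (y ^ (k + 1))⁻¹
          = y * (y ^ k * x * (y ^ k)⁻¹) * y⁻¹ := by group
        _ = c ^ k * (y * x * y⁻¹) := by rw [ih, ← mul_assoc y, (h.pow_right k).eq]; group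
        _ = c ^ (k + 1) * x := by rw [pow_succ, hc, commutatorElement_def]; group
  have hc_pow : c ^ orderOf y = 1 := by
    simpa [pow_orderOf_eq_one] using (hconj (orderOf y)).symm
  have hc_one : c = 1 :=
    orderOf_eq_one_iff.mp (hcop.eq_one_of_dvd (orderOf_dvd_of_pow_eq_one hc_pow))
  exact commutatorElement_eq_one_iff_commute.mp hc_one

theorem Subgroup.normalizer_le_normalizer_centralizer {G : Type*} [Group G] (s : Set G) :
    normalizer s ≤ normalizer (centralizer s : Set G) := by
  intro n hn x
  simp only [SetLike.mem_coe, mem_centralizer_iff]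
  refine ⟨fun hx t ht => ?_, fun hx t ht => ?_⟩
  · have := hx _ ((mem_set_normalizer_iff''.mp hn t).mp ht)
    calc t * (n * x * n⁻¹) = n * ((n⁻¹ * t * n) * x) * n⁻¹ := by group
      _ = n * (x * (n⁻¹ * t * n)) * n⁻¹ := by rw [this]
      _ = n * x * n⁻¹ * t := by group
  · have := hx _ ((mem_set_normalizer_iff.mp hn t).mp ht)
    calc t * x = n⁻¹ * ((n * t * n⁻¹) * (n * x * n⁻¹)) * n := by group
      _ = n⁻¹ * ((n * x * n⁻¹) * (n * t * n⁻¹)) * n := by rw [this]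
      _ = x * t := by group

namespace Subgroup

variable {p : ℕ} {G : Type*} [Group G] {H K : Subgroup G}

/-- `O_p(H)`, as a subgroup of the ambient group. -/
def pCoreOf (H : Subgroup G) (p : ℕ) : Subgroup G :=
  (_root_.pCore p H).map H.subtype

theorem pCoreOf_le : H.pCoreOf p ≤ H :=
  map_subtype_le _

theorem isPGroup_pCoreOf [Finite G] [Fact p.Prime] : IsPGroup p (H.pCoreOf p) :=
  isPGroup_pCore.map _

theorem le_normalizer_pCoreOf : H ≤ normalizer (H.pCoreOf p : Set G) := by
  have := pCore_normal (p := p) (G := H)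
  calc H = (normalizer (_root_.pCore p H : Set H)).map H.subtype := by
        rw [normalizer_eq_top, ← MonoidHom.range_eq_map, range_subtype]
    _ ≤ normalizer (H.pCoreOf p : Set G) := le_normalizer_map _

theorem le_pCoreOf (hKH : K ≤ H) (hKp : IsPGroup p K) (hHK : H ≤ normalizer (K : Set G)) :
    K ≤ H.pCoreOf p := by
  have hnormal : (K.subgroupOf H).Normal := (normal_subgroupOf_iff_le_normalizer hKH).mpr hHK
  intro k hk
  exact ⟨⟨k, hKH hk⟩, le_pCore hnormal hKp.comap_subtype hk, rfl⟩

theorem normalizer_le_normalizer_pCoreOf [Finite G] [Fact p.Prime] :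
    normalizer (H : Set G) ≤ normalizer (H.pCoreOf p : Set G) := by
  intro n hn
  rw [mem_normalizer_iff_map_conj_eq] at hn ⊢
  set φ : G →* G := (MulAut.conj n).toMonoidHom
  have hle : (H.pCoreOf p).map φ ≤ H.pCoreOf p := by
    refine le_pCoreOf ?_ (isPGroup_pCoreOf.map φ) ?_
    · exact (map_mono pCoreOf_le).trans hn.le
    · exact hn.ge.trans ((map_mono le_normalizer_pCoreOf).trans (le_normalizer_map φ))
  exact eq_of_le_of_card_ge hle (card_map_of_injective (MulAut.conj n).injective).ge

theorem pCoreOf_inf_le_pCoreOf [Finite G] [Fact p.Prime] (hHK : H ≤ K) :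
    K.pCoreOf p ⊓ H ≤ H.pCoreOf p :=
  le_pCoreOf inf_le_right isPGroup_pCoreOf.to_inf_left
    ((le_inf (hHK.trans le_normalizer_pCoreOf) le_normalizer).trans
      inf_normalizer_le_normalizer_inf)

theorem pCoreOf_le_pCoreOf_of_le_normalizer [Finite G] [Fact p.Prime] (hHK : H ≤ K)
    (hK : K ≤ normalizer (H : Set G)) : H.pCoreOf p ≤ K.pCoreOf p :=
  le_pCoreOf (pCoreOf_le.trans hHK) isPGroup_pCoreOf (hK.trans normalizer_le_normalizer_pCoreOf)

end Subgroup

theorem characteristicP_iff {p : ℕ} {G : Type*} [Group G] (H : Subgroup G) :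
    CharacteristicP p H ↔ H ⊓ centralizer (H.pCoreOf p : Set G) ≤ H.pCoreOf p := by
  have hinj := H.subtype_injective
  constructor
  · rintro h g ⟨hgH, hg⟩
    refine ⟨⟨g, hgH⟩, h (mem_centralizer_iff.mpr fun r hr => ?_), rfl⟩
    exact Subtype.ext (mem_centralizer_iff.mp hg r ⟨r, hr, rfl⟩)
  · intro h x hx
    refine (mem_map_iff_mem hinj).mp (h ⟨x.2, mem_centralizer_iff.mpr ?_⟩)
    rintro _ ⟨r, hr, rfl⟩
    exact congrArg Subtype.val (mem_centralizer_iff.mp hx r hr)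

section CharacteristicP

variable {p : ℕ} [Fact p.Prime] {G : Type*} [Group G] [Finite G] {H K : Subgroup G}

theorem commute_of_mem_pCoreOf (hHK : H ≤ K) (hK : K ≤ normalizer (H : Set G)) {x y : G}
    (hy : y ∈ H ⊓ centralizer (H.pCoreOf p : Set G)) (hcop : p.Coprime (orderOf y))
    (hx : x ∈ K.pCoreOf p) : Commute y x := by
  obtain ⟨hyH, hyC⟩ := mem_inf.mp hy
  have hcK : ⁅y, x⁆ ∈ K.pCoreOf p :=
    mul_mem ((mem_normalizer_iff.mp ((hHK.trans le_normalizer_pCoreOf) hyH) x).mp hx) (inv_mem hx)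
  have hcH : ⁅y, x⁆ ∈ H := by
    rw [commutatorElement_def, mul_assoc, mul_assoc, ← mul_assoc x]
    exact mul_mem hyH ((mem_normalizer_iff.mp (hK (pCoreOf_le hx)) _).mp (inv_mem hyH))
  have hc : ⁅y, x⁆ ∈ H.pCoreOf p := pCoreOf_inf_le_pCoreOf hHK ⟨hcK, hcH⟩
  refine commute_of_commute_commutatorElement (mem_centralizer_iff.mp hyC _ hc).symm ?_
  simpa using isPGroup_pCoreOf.orderOf_coprime hcop ⟨_, hc⟩

theorem CharacteristicP.of_le_normalizer (hHK : H ≤ K) (hK : K ≤ normalizer (H : Set G))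
    (hKp : CharacteristicP p K) : CharacteristicP p H := by
  rw [characteristicP_iff] at hKp ⊢
  have hp : p.Prime := Fact.out
  have hDp : IsPGroup p (H ⊓ centralizer (H.pCoreOf p : Set G) : Subgroup G) := by
    refine isPGroup_of_forall_orderOf_prime fun y hq => ?_
    rw [← orderOf_coe] at hq ⊢
    by_contra hne
    have hcop : p.Coprime (orderOf (y : G)) := (Nat.coprime_primes hp hq).mpr (Ne.symm hne)
    have hyK : (y : G) ∈ K.pCoreOf p := hKp ⟨hHK (mem_inf.mp y.2).1, mem_centralizer_iff.mpr
      fun x hx => (commute_of_mem_pCoreOf hHK hK y.2 hcop hx).eq.symm⟩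
    have hy_one := isPGroup_pCoreOf.orderOf_coprime hcop ⟨_, hyK⟩
    rw [orderOf_mk, Nat.coprime_self] at hy_one
    exact hq.one_lt.ne' hy_one
  exact le_pCoreOf inf_le_left hDp ((le_inf le_normalizer (le_normalizer_pCoreOf.trans
    (normalizer_le_normalizer_centralizer _))).trans inf_normalizer_le_normalizer_inf)

theorem CharacteristicP.of_inf_centralizer_le (hHK : H ≤ K) (hK : K ≤ normalizer (H : Set G))
    (hcent : K ⊓ centralizer (K.pCoreOf p : Set G) ≤ H) (hHp : CharacteristicP p H) :
    CharacteristicP p K := by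
  rw [characteristicP_iff] at hHp ⊢
  have hHK_core := pCoreOf_le_pCoreOf_of_le_normalizer (p := p) hHK hK
  exact fun g hg => hHK_core (hHp ⟨hcent hg, centralizer_le hHK_core hg.2⟩)

end CharacteristicP

theorem stmt2 {G : Type*} [Group G] [Finite G] (p : ℕ) [Fact p.Prime]
    (P : Subgroup G) (hP : IsPGroup p ↥P) :
    CharacteristicP p ↥(Subgroup.centralizer (P : Set G)) ↔ CharacteristicP p ↥(Subgroup.normalizer (P : Set G)) := by
  have hCN : centralizer (P : Set G) ≤ normalizer (P : Set G) := centralizer_le_normalizer _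
  have hNC : normalizer (P : Set G) ≤ normalizer (centralizer (P : Set G) : Set G) :=
    le_normalizer_of_normal_subgroupOf hCN
  have hPN : P ≤ (normalizer (P : Set G)).pCoreOf p := le_pCoreOf le_normalizer hP le_rfl
  exact ⟨.of_inf_centralizer_le hCN hNC (inf_le_right.trans (centralizer_le hPN)),
    .of_le_normalizer hCN hNC⟩
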